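/- Let X be a smooth complex projective surface, 𝓖 a foliation on X with canonical divisor K_𝓖, and ε > 0 a real number. Let D be a nef divisor on X such that (D - εK_𝓖)·C ≥ 0 for every reduced and irreducible curve C on X with D·C > 0. Then for every negative curve C on X that is not 𝓖-invariant and satisfies D·C > 0, one has C²/(D·C) ≥ -1/ε. -/
import Mathlib

/-- Theorem `foliated1`, first part: abstracting a smooth complex projective
surface with a foliation `𝓖`.  `Curve` is the type of reduced and irreducible curves on `X`;
`sq C = C²`, `dDot C = D·C`, `kDot C = K_𝓖·C`, and `Inv C` means `C` is `𝓖`-invariant.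
The hypothesis `hbrunella` is Brunella's inequality `C² ≥ -K_𝓖·C` for non-invariant curves;
`hDelta` says `D ∈ Δ(X; K_𝓖, ε)`, i.e. `(D - εK_𝓖)·C ≥ 0` for all reduced irreducible `C`
with `D·C > 0`.  Conclusion: every negative non-`𝓖`-invariant curve `C` with `D·C > 0`
satisfies `C²/(D·C) ≥ -1/ε`. -/
theorem stmt_4 (Curve : Type*) (sq dDot kDot : Curve → ℝ) (Inv : Curve → Prop)
    (ε : ℝ) (hε : 0 < ε)
    (hbrunella : ∀ C : Curve, ¬ Inv C → sq C ≥ -kDot C)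
    (hDelta : ∀ C : Curve, 0 < dDot C → dDot C - ε * kDot C ≥ 0) :
    ∀ C : Curve, sq C < 0 → ¬ Inv C → 0 < dDot C → sq C / dDot C ≥ -(1 / ε) := by
  intro C _ hni hd
  have h1 := hbrunella C hni
  have h2 := hDelta C hd
  rw [ge_iff_le, ← neg_div, div_le_div_iff₀ hε hd]
  nlinarith
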